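/- arXiv:2308.01591 — 3 statements merged into one kernel-verified Lean document; each statement's English description precedes it below -/
import Mathlib

section
/- Let e, d ∈ ℕ, a ∈ ℝ^e and c ∈ [0,1]. Let b : ℝ^e → ℝ^e be C² with b, ∇b, ∇²b bounded, let σ : ℝ^e → ℝ^{e×d} be C¹ with σ and ∇σ bounded, and let x : [0,1] → ℝ^d be C¹. Then there exists a unique pair of C¹ paths (y^0, ẑ) : [0,1] → ℝ^e × ℝ^e such that y^0_0 = a, (y^0)'_t = b(y^0_t) for all t, ẑ_0 = 0, and ẑ'_t = ∫₀¹ ∇b(y^0_t + θ c ẑ_t)⟨ẑ_t⟩ dθ + σ(y^0_t + c ẑ_t) x'_t for all t ∈ [0,1]. In particular no explosion occurs on [0,1]. -/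
/-!
The noiseless path solves `y' = b(y)` with `b` globally Lipschitz. For `c ≠ 0` the averaged
gradient `∫₀¹ ∇b(y + θcẑ)⟨ẑ⟩ dθ` is the difference quotient `(b(y + cẑ) - b(y))/c`, and for `c = 0`
it is `∇b(y)⟨ẑ⟩`; either way it is Lipschitz in `ẑ` with the constant bounding `∇b`, so with
`σ` Lipschitz the `ẑ`-equation has a vector field that is continuous in time and uniformly
Lipschitz in space. For such fields global existence holds: truncating the field radially makes
it bounded, Picard–Lindelöf gives a solution of the truncated equation, and Grönwall's inequality
keeps that solution inside the ball where the truncation does nothing.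
-/

open Set MeasureTheory
open scoped NNReal

theorem LipschitzWith.norm_le_mul_norm_add {E F : Type*} [SeminormedAddCommGroup E]
    [SeminormedAddCommGroup F] {f : E → F} {K : ℝ≥0} (hf : LipschitzWith K f) (x : E) :
    ‖f x‖ ≤ K * ‖x‖ + ‖f 0‖ :=
  calc ‖f x‖ ≤ ‖f x - f 0‖ + ‖f 0‖ := norm_le_norm_sub_add _ _
    _ ≤ K * ‖x‖ + ‖f 0‖ := by grw [hf.norm_sub_le x 0, sub_zero]

theorem exists_nnnorm_le_of_bddAbove {α F : Type*} [SeminormedAddCommGroup F] {f : α → F}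
    (h : BddAbove (range fun a => ‖f a‖)) : ∃ C : ℝ≥0, ∀ a, ‖f a‖₊ ≤ C := by
  obtain ⟨C, hC⟩ := h
  exact ⟨C.toNNReal, fun a => by
    rw [← NNReal.coe_le_coe, coe_nnnorm]; exact (hC ⟨a, rfl⟩).trans (Real.le_coe_toNNReal C)⟩

section

variable {E : Type*} [NormedAddCommGroup E] [NormedSpace ℝ E]

theorem contDiffOn_one_of_hasDerivAt {f f' : ℝ → E} {s : Set ℝ}
    (hf : ∀ t ∈ s, HasDerivAt f (f' t) t) (hf' : ContinuousOn f' s) : ContDiffOn ℝ 1 f s := by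
  rw [← zero_add (1 : WithTop ℕ∞), contDiffOn_succ_iff_hasFDerivWithinAt (by simp)]
  intro t ht
  refine ⟨s, by simpa [insert_eq_of_mem ht] using self_mem_nhdsWithin, by simp,
    fun t => ContinuousLinearMap.toSpanSingleton ℝ (f' t),
    fun u hu => (hf u hu).hasFDerivAt.hasFDerivWithinAt, ?_⟩
  rw [contDiffOn_zero]
  exact (ContinuousLinearMap.toSpanSingletonLIE ℝ E).continuous.comp_continuousOn hf'

noncomputable def radialRetraction (R : ℝ) (x : E) : E := (R / max R ‖x‖) • x

theorem radialRetraction_of_norm_le {R : ℝ} {x : E} (h : ‖x‖ ≤ R) : radialRetraction R x = x := by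
  rcases (norm_nonneg x).trans h |>.eq_or_lt with hR | hR
  · rw [← hR, norm_le_zero_iff] at h; simp [radialRetraction, h]
  · simp [radialRetraction, max_eq_left h, hR.ne']

theorem norm_radialRetraction_le_norm {R : ℝ} (hR : 0 ≤ R) (x : E) :
    ‖radialRetraction R x‖ ≤ ‖x‖ := by
  rw [radialRetraction, norm_smul, Real.norm_of_nonneg (by positivity)]
  exact mul_le_of_le_one_left (norm_nonneg x) (div_le_one_of_le₀ (le_max_left _ _) (by positivity))

theorem norm_radialRetraction_le {R : ℝ} (hR : 0 ≤ R) (x : E) : ‖radialRetraction R x‖ ≤ R := by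
  rw [radialRetraction, norm_smul, Real.norm_of_nonneg (by positivity), div_mul_eq_mul_div]
  exact div_le_of_le_mul₀ (by positivity) hR (mul_le_mul_of_nonneg_left (le_max_right _ _) hR)

theorem lipschitzWith_radialRetraction {R : ℝ} (hR : 0 < R) :
    LipschitzWith 2 (radialRetraction (E := E) R) := by
  refine LipschitzWith.of_dist_le_mul fun x y => ?_
  set sx := max R ‖x‖
  set sy := max R ‖y‖
  have hsx : 0 < sx := hR.trans_le (le_max_left _ _)
  have hsy : 0 < sy := hR.trans_le (le_max_left _ _)
  have hs : |sx - sy| ≤ ‖x - y‖ := by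
    calc |sx - sy| ≤ |‖x‖ - ‖y‖| := by
          simp only [sx, sy, max_comm R]; exact abs_max_sub_max_le_abs _ _ _
      _ ≤ ‖x - y‖ := abs_norm_sub_norm_le x y
  have hsplit : radialRetraction R x - radialRetraction R y =
      (R / sx) • (x - y) + (R / sx - R / sy) • y := by
    simp only [radialRetraction, smul_sub, sub_smul]; abel
  have h1 : ‖(R / sx) • (x - y)‖ ≤ ‖x - y‖ := by
    rw [norm_smul, Real.norm_of_nonneg (by positivity)]
    exact mul_le_of_le_one_left (norm_nonneg _) (div_le_one_of_le₀ (le_max_left _ _) hsx.le)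
  have h2 : ‖(R / sx - R / sy) • y‖ ≤ ‖x - y‖ := by
    have hy : ‖y‖ ≤ sy := le_max_right _ _
    have hRsx : R / sx ≤ 1 := div_le_one_of_le₀ (le_max_left _ _) hsx.le
    calc ‖(R / sx - R / sy) • y‖ = |R / sx - R / sy| * ‖y‖ := by rw [norm_smul, Real.norm_eq_abs]
      _ ≤ |R / sx - R / sy| * sy := by gcongr
      _ = |(R / sx - R / sy) * sy| := by rw [abs_mul, abs_of_pos hsy]
      _ = R / sx * |sx - sy| := by
          rw [show (R / sx - R / sy) * sy = R / sx * (sy - sx) by field_simp, abs_mul,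
            abs_of_nonneg (by positivity), abs_sub_comm]
      _ ≤ 1 * ‖x - y‖ := by gcongr
      _ = ‖x - y‖ := one_mul _
  rw [dist_eq_norm, dist_eq_norm, hsplit, NNReal.coe_ofNat]
  linarith [norm_add_le ((R / sx) • (x - y)) ((R / sx - R / sy) • y)]

theorem ODE_solution_unique_of_hasDerivAt {v : ℝ → E → E} {K : ℝ≥0} {f g : ℝ → E} {a b : ℝ}
    (hv : ∀ t, LipschitzWith K (v t))
    (hf : ∀ t ∈ Icc a b, HasDerivAt f (v t (f t)) t)
    (hg : ∀ t ∈ Icc a b, HasDerivAt g (v t (g t)) t) (ha : f a = g a) : EqOn f g (Icc a b) :=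
  ODE_solution_unique hv (HasDerivAt.continuousOn hf)
    (fun t ht => (hf t (Ico_subset_Icc_self ht)).hasDerivWithinAt) (HasDerivAt.continuousOn hg)
    (fun t ht => (hg t (Ico_subset_Icc_self ht)).hasDerivWithinAt) ha

theorem isPicardLindelof_comp_radialRetraction {v : ℝ → E → E} {K : ℝ≥0} {C R tmin tmax : ℝ}
    (hlip : ∀ t, LipschitzWith K (v t)) (hcont : ∀ x, Continuous (v · x))
    (growth : ∀ t ∈ Icc tmin tmax, ∀ x, ‖v t x‖ ≤ K * ‖x‖ + C) (hR : 0 < R)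
    (t₀ : Icc tmin tmax) (x₀ : E) :
    IsPicardLindelof (fun t x => v t (radialRetraction R x)) t₀ x₀
      ((K * R + C).toNNReal * (tmax - tmin).toNNReal) 0 (K * R + C).toNNReal (K * 2) where
  lipschitzOnWith t _ := ((hlip t).comp (lipschitzWith_radialRetraction hR)).lipschitzOnWith
  continuousOn x _ := (hcont _).continuousOn
  norm_le t ht x _ := (growth t ht _).trans <| by
    grw [norm_radialRetraction_le hR.le, ← Real.le_coe_toNNReal]
  mul_max_le := by
    obtain ⟨h₁, h₂⟩ : tmin ≤ t₀ ∧ (t₀ : ℝ) ≤ tmax := t₀.2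
    rw [NNReal.coe_zero, sub_zero, NNReal.coe_mul, Real.coe_toNNReal (tmax - tmin) (by linarith)]
    exact mul_le_mul_of_nonneg_left (max_le (by linarith) (by linarith)) (NNReal.coe_nonneg _)

theorem exists_forall_mem_Icc_hasDerivAt_of_lipschitzWith [CompleteSpace E] {v : ℝ → E → E}
    {K : ℝ≥0} (hlip : ∀ t, LipschitzWith K (v t)) (hcont : ∀ x, Continuous (v · x)) (x₀ : E)
    {t₀ T : ℝ} (hT : t₀ ≤ T) :
    ∃ f : ℝ → E, f t₀ = x₀ ∧ ∀ t ∈ Icc t₀ T, HasDerivAt f (v t (f t)) t := by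
  -- Working on the larger interval `[t₀ - 1, T + 1]` yields two-sided derivatives at `t₀` and `T`.
  obtain ⟨C, hC⟩ := isCompact_Icc.exists_bound_of_continuousOn (hcont 0).continuousOn
    (s := Icc (t₀ - 1) (T + 1))
  have hC0 : 0 ≤ C := (norm_nonneg _).trans (hC t₀ ⟨by linarith, by linarith⟩)
  have growth : ∀ t ∈ Icc (t₀ - 1) (T + 1), ∀ x, ‖v t x‖ ≤ K * ‖x‖ + C := fun t ht x =>
    ((hlip t).norm_le_mul_norm_add x).trans (by grw [hC t ht])
  obtain ⟨R, hR, hRbound⟩ : ∃ R > 0, ∀ t ∈ Icc t₀ T, gronwallBound ‖x₀‖ K C (t - t₀) ≤ R := by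
    have hmono := gronwallBound_mono (norm_nonneg x₀) hC0 K.2
    refine ⟨gronwallBound ‖x₀‖ K C (T - t₀) + 1, ?_, fun t ht => ?_⟩
    · have h : gronwallBound ‖x₀‖ K C 0 ≤ gronwallBound ‖x₀‖ K C (T - t₀) :=
        hmono (sub_nonneg.2 hT)
      rw [gronwallBound_x0] at h
      linarith [norm_nonneg x₀]
    · have h : gronwallBound ‖x₀‖ K C (t - t₀) ≤ gronwallBound ‖x₀‖ K C (T - t₀) :=
        hmono (by linarith [ht.2])
      linarith
  set w : ℝ → E → E := fun t x => v t (radialRetraction R x)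
  have hw := isPicardLindelof_comp_radialRetraction hlip hcont growth hR ⟨t₀, by grind⟩ x₀
  obtain ⟨f, hf₀, hf⟩ := hw.exists_eq_forall_mem_Icc_hasDerivWithinAt₀
  have hf' : ∀ t ∈ Icc t₀ T, HasDerivAt f (w t (f t)) t := fun t ht =>
    (hf t ⟨by linarith [ht.1], by linarith [ht.2]⟩).hasDerivAt
      (Icc_mem_nhds (by linarith [ht.1]) (by linarith [ht.2]))
  have bound : ∀ t ∈ Icc t₀ T, ‖f t‖ ≤ gronwallBound ‖x₀‖ K C (t - t₀) :=
    norm_le_gronwallBound_of_norm_deriv_right_le (HasDerivAt.continuousOn hf')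
      (fun t ht => (hf' t (Ico_subset_Icc_self ht)).hasDerivWithinAt) (by rw [hf₀])
      fun t ht => (growth t ⟨by linarith [ht.1], by linarith [ht.2]⟩ _).trans <| by
        grw [norm_radialRetraction_le_norm hR.le]
  refine ⟨f, hf₀, fun t ht => ?_⟩
  simpa [w, radialRetraction_of_norm_le ((bound t ht).trans (hRbound t ht))] using hf' t ht

section Integral

variable {b : E → E} {c : ℝ} {y z : E}

theorem integral_fderiv_apply_eq_smul_sub [CompleteSpace E] (hb : ContDiff ℝ 1 b) (hc : c ≠ 0) :
    ∫ θ in (0:ℝ)..1, fderiv ℝ b (y + (θ * c) • z) z = c⁻¹ • (b (y + c • z) - b y) := by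
  have hderiv : ∀ θ : ℝ, HasDerivAt (fun θ : ℝ => c⁻¹ • b (y + (θ * c) • z))
      (fderiv ℝ b (y + (θ * c) • z) z) θ := by
    intro θ
    have hline : HasDerivAt (fun θ : ℝ => y + (θ * c) • z) (c • z) θ := by
      simpa using (((hasDerivAt_id θ).mul_const c).smul_const z).const_add y
    refine (((hb.differentiable one_ne_zero _).hasFDerivAt.comp_hasDerivAt θ hline).const_smul
      c⁻¹).congr_deriv ?_
    rw [map_smul, smul_smul, inv_mul_cancel₀ hc, one_smul]
  have hcont : Continuous fun θ : ℝ => fderiv ℝ b (y + (θ * c) • z) z := by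
    have := hb.continuous_fderiv one_ne_zero
    fun_prop
  rw [intervalIntegral.integral_eq_sub_of_hasDerivAt (fun θ _ => hderiv θ)
    (hcont.intervalIntegrable 0 1)]
  simp [smul_sub]

theorem lipschitzWith_integral_fderiv_apply [CompleteSpace E] {K : ℝ≥0} (hb : ContDiff ℝ 1 b)
    (hK : ∀ x, ‖fderiv ℝ b x‖₊ ≤ K) (c : ℝ) (y : E) :
    LipschitzWith K fun z => ∫ θ in (0:ℝ)..1, fderiv ℝ b (y + (θ * c) • z) z := by
  rcases eq_or_ne c 0 with rfl | hc
  · simpa using (fderiv ℝ b y).lipschitz.weaken (hK y)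
  · have hlip := lipschitzWith_of_nnnorm_fderiv_le (hb.differentiable one_ne_zero) hK
    simp_rw [integral_fderiv_apply_eq_smul_sub hb hc]
    have h := (lipschitzWith_smul c⁻¹).comp
      ((hlip.comp ((LipschitzWith.const y).add (lipschitzWith_smul c))).sub
        (LipschitzWith.const (b y)))
    rwa [zero_add, add_zero, mul_left_comm, nnnorm_inv, inv_mul_cancel₀ (nnnorm_ne_zero_iff.2 hc),
      mul_one] at h

theorem continuous_integral_fderiv_apply (hb : ContDiff ℝ 1 b) (c : ℝ) :
    Continuous fun p : E × E => ∫ θ in (0:ℝ)..1, fderiv ℝ b (p.1 + (θ * c) • p.2) p.2 := by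
  have := hb.continuous_fderiv one_ne_zero
  exact intervalIntegral.continuous_parametric_intervalIntegral_of_continuous (by fun_prop)
    continuous_const

end Integral

section RescaledField

variable {F : Type*} [NormedAddCommGroup F] [NormedSpace ℝ F]

/-- The right-hand side of the `ẑ`-equation along the path `y`, driven by `u = x'`. -/
noncomputable def rescaledField (b : E → E) (σ : E → F →L[ℝ] E) (c : ℝ) (y : ℝ → E) (u : ℝ → F)
    (t : ℝ) (ζ : E) : E :=
  (∫ θ in (0:ℝ)..1, fderiv ℝ b (y t + (θ * c) • ζ) ζ) + σ (y t + c • ζ) (u t)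

variable {b : E → E} {σ : E → F →L[ℝ] E} {c : ℝ} {y : ℝ → E} {u : ℝ → F}

theorem lipschitzWith_rescaledField [CompleteSpace E] {Kb Kσ U : ℝ≥0} (hb : ContDiff ℝ 1 b)
    (hKb : ∀ x, ‖fderiv ℝ b x‖₊ ≤ Kb) (hσ : LipschitzWith Kσ σ) {t : ℝ} (hu : ‖u t‖₊ ≤ U) :
    LipschitzWith (Kb + Kσ * ‖c‖₊ * U) (rescaledField b σ c y u t) := by
  have heval : LipschitzWith ‖u t‖₊ fun A : F →L[ℝ] E => A (u t) :=
    LipschitzWith.of_dist_le_mul fun A B => by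
      rw [dist_eq_norm, dist_eq_norm, ← sub_apply, coe_nnnorm, mul_comm]
      exact (A - B).le_opNorm (u t)
  refine (lipschitzWith_integral_fderiv_apply hb hKb c (y t)).add <|
    (heval.comp (hσ.comp ((LipschitzWith.const (y t)).add (lipschitzWith_smul c)))).weaken ?_
  rw [zero_add, mul_comm, mul_comm Kσ]
  gcongr

theorem continuousOn_rescaledField (hb : ContDiff ℝ 1 b) (hσ : Continuous σ)
    {z : ℝ → E} {s : Set ℝ} (hy : ContinuousOn y s) (hu : ContinuousOn u s)
    (hz : ContinuousOn z s) : ContinuousOn (fun t => rescaledField b σ c y u t (z t)) s :=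
  ((continuous_integral_fderiv_apply hb c).comp_continuousOn (hy.prodMk hz)).add <|
    (hσ.comp_continuousOn (hy.add (hz.const_smul c))).clm_apply hu

end RescaledField

end

theorem stmt_10_general (e d : ℕ) (a : EuclideanSpace ℝ (Fin e)) (c : ℝ)
    (b : EuclideanSpace ℝ (Fin e) → EuclideanSpace ℝ (Fin e)) (hb : ContDiff ℝ 2 b)
    (hb1 : BddAbove (Set.range fun y => ‖fderiv ℝ b y‖))
    (σ : EuclideanSpace ℝ (Fin e) →
      (EuclideanSpace ℝ (Fin d) →L[ℝ] EuclideanSpace ℝ (Fin e)))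
    (hσ : ContDiff ℝ 1 σ)
    (hσ1 : BddAbove (Set.range fun y => ‖fderiv ℝ σ y‖))
    (x' : ℝ → EuclideanSpace ℝ (Fin d)) (hx' : Continuous x') :
    (∃ y0 z : ℝ → EuclideanSpace ℝ (Fin e),
      ContDiffOn ℝ 1 y0 (Set.Icc 0 1) ∧ ContDiffOn ℝ 1 z (Set.Icc 0 1) ∧
      y0 0 = a ∧ z 0 = 0 ∧
      (∀ t ∈ Set.Icc (0:ℝ) 1, HasDerivAt y0 (b (y0 t)) t) ∧
      (∀ t ∈ Set.Icc (0:ℝ) 1, HasDerivAt z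
        ((∫ θ in (0:ℝ)..1, fderiv ℝ b (y0 t + (θ * c) • z t) (z t)) +
          σ (y0 t + c • z t) (x' t)) t)) ∧
    (∀ y0 z y1 z1 : ℝ → EuclideanSpace ℝ (Fin e),
      y0 0 = a → z 0 = 0 →
      (∀ t ∈ Set.Icc (0:ℝ) 1, HasDerivAt y0 (b (y0 t)) t) →
      (∀ t ∈ Set.Icc (0:ℝ) 1, HasDerivAt z
        ((∫ θ in (0:ℝ)..1, fderiv ℝ b (y0 t + (θ * c) • z t) (z t)) +
          σ (y0 t + c • z t) (x' t)) t) →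
      y1 0 = a → z1 0 = 0 →
      (∀ t ∈ Set.Icc (0:ℝ) 1, HasDerivAt y1 (b (y1 t)) t) →
      (∀ t ∈ Set.Icc (0:ℝ) 1, HasDerivAt z1
        ((∫ θ in (0:ℝ)..1, fderiv ℝ b (y1 t + (θ * c) • z1 t) (z1 t)) +
          σ (y1 t + c • z1 t) (x' t)) t) →
      ∀ t ∈ Set.Icc (0:ℝ) 1, y0 t = y1 t ∧ z t = z1 t) := by
  have hb' : ContDiff ℝ 1 b := hb.of_le one_le_two
  obtain ⟨Kb, hKb⟩ := exists_nnnorm_le_of_bddAbove (f := fderiv ℝ b) hb1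
  obtain ⟨Kσ, hKσ⟩ := exists_nnnorm_le_of_bddAbove (f := fderiv ℝ σ) hσ1
  have hb_lip := lipschitzWith_of_nnnorm_fderiv_le (hb'.differentiable one_ne_zero) hKb
  have hσ_lip := lipschitzWith_of_nnnorm_fderiv_le (hσ.differentiable one_ne_zero) hKσ
  -- Outside `[0,1]` the paths are frozen at their endpoint values, so that the field is defined
  -- and Lipschitz for all times.
  let π : ℝ → ℝ := fun t => projIcc 0 1 zero_le_one t
  have hπ : ∀ t ∈ Icc (0:ℝ) 1, π t = t := fun t ht => congrArg Subtype.val (projIcc_of_mem _ ht)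
  obtain ⟨U, hU⟩ := exists_nnnorm_le_of_bddAbove (f := x' ∘ π) <| by
    obtain ⟨C, hC⟩ := isCompact_Icc.exists_bound_of_continuousOn hx'.continuousOn
    exact ⟨C, by rintro _ ⟨t, rfl⟩; exact hC _ (projIcc 0 1 zero_le_one t).2⟩
  have hfield (y : ℝ → EuclideanSpace ℝ (Fin e)) {t : ℝ} (ht : t ∈ Icc (0:ℝ) 1) :
      rescaledField b σ c (y ∘ π) (x' ∘ π) t = rescaledField b σ c y x' t := by
    funext ζ
    simp only [rescaledField, Function.comp_apply, hπ t ht]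
  have hlip (y : ℝ → EuclideanSpace ℝ (Fin e)) (t : ℝ) :=
    lipschitzWith_rescaledField (y := y ∘ π) (c := c) hb' hKb hσ_lip (hU t)
  have hπ_cont : Continuous π := continuous_subtype_val.comp continuous_projIcc
  obtain ⟨y0, hy0₀, hy0⟩ := exists_forall_mem_Icc_hasDerivAt_of_lipschitzWith
    (fun _ => hb_lip) (fun _ => continuous_const) a zero_le_one
  have hy0_cont : ContinuousOn y0 (Icc 0 1) := HasDerivAt.continuousOn hy0
  obtain ⟨z, hz₀, hz⟩ := exists_forall_mem_Icc_hasDerivAt_of_lipschitzWith (hlip y0)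
    (fun ζ => continuousOn_univ.1 <| continuousOn_rescaledField hb' hσ.continuous
      (hy0_cont.comp_continuous hπ_cont fun t => (projIcc 0 1 zero_le_one t).2).continuousOn
      (hx'.comp hπ_cont).continuousOn continuousOn_const)
    0 zero_le_one
  replace hz : ∀ t ∈ Icc (0:ℝ) 1, HasDerivAt z (rescaledField b σ c y0 x' t (z t)) t :=
    fun t ht => hfield y0 ht ▸ hz t ht
  refine ⟨⟨y0, z, contDiffOn_one_of_hasDerivAt hy0 (hb'.continuous.comp_continuousOn hy0_cont),
    contDiffOn_one_of_hasDerivAt hz (continuousOn_rescaledField hb' hσ.continuous hy0_cont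
      hx'.continuousOn (HasDerivAt.continuousOn hz)), hy0₀, hz₀, hy0, hz⟩, ?_⟩
  intro ya za yb zb hya₀ hza₀ hya hza hyb₀ hzb₀ hyb hzb
  have hy : EqOn ya yb (Icc 0 1) :=
    ODE_solution_unique_of_hasDerivAt (fun _ => hb_lip) hya hyb (hya₀.trans hyb₀.symm)
  have hz : EqOn za zb (Icc 0 1) :=
    ODE_solution_unique_of_hasDerivAt (hlip ya) (fun t ht => hfield ya ht ▸ hza t ht)
      (fun t ht => by rw [hfield ya ht, rescaledField, hy ht]; exact hzb t ht)
      (hza₀.trans hzb₀.symm)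
  exact fun t ht => ⟨hy ht, hz ht⟩

/-- Global existence and uniqueness on `[0,1]` of the coupled system
`(y⁰)' = b(y⁰)`, `y⁰_0 = a`, and
`ẑ' = ∫₀¹ ∇b(y⁰ + θc ẑ)⟨ẑ⟩ dθ + σ(y⁰ + c ẑ) x'`, `ẑ_0 = 0`,
for a `C¹` driving path `x`; in particular no explosion occurs. -/
theorem stmt_10 (e d : ℕ) (a : EuclideanSpace ℝ (Fin e)) (c : ℝ) (hc : c ∈ Set.Icc (0:ℝ) 1)
    (b : EuclideanSpace ℝ (Fin e) → EuclideanSpace ℝ (Fin e)) (hb : ContDiff ℝ 2 b)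
    (hb0 : BddAbove (Set.range fun y => ‖b y‖))
    (hb1 : BddAbove (Set.range fun y => ‖fderiv ℝ b y‖))
    (hb2 : BddAbove (Set.range fun y => ‖fderiv ℝ (fderiv ℝ b) y‖))
    (σ : EuclideanSpace ℝ (Fin e) →
      (EuclideanSpace ℝ (Fin d) →L[ℝ] EuclideanSpace ℝ (Fin e)))
    (hσ : ContDiff ℝ 1 σ)
    (hσ0 : BddAbove (Set.range fun y => ‖σ y‖))
    (hσ1 : BddAbove (Set.range fun y => ‖fderiv ℝ σ y‖))
    (x x' : ℝ → EuclideanSpace ℝ (Fin d))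
    (hx : ∀ t, HasDerivAt x (x' t) t) (hx' : Continuous x') :
    (∃ y0 z : ℝ → EuclideanSpace ℝ (Fin e),
      ContDiffOn ℝ 1 y0 (Set.Icc 0 1) ∧ ContDiffOn ℝ 1 z (Set.Icc 0 1) ∧
      y0 0 = a ∧ z 0 = 0 ∧
      (∀ t ∈ Set.Icc (0:ℝ) 1, HasDerivAt y0 (b (y0 t)) t) ∧
      (∀ t ∈ Set.Icc (0:ℝ) 1, HasDerivAt z
        ((∫ θ in (0:ℝ)..1, fderiv ℝ b (y0 t + (θ * c) • z t) (z t)) +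
          σ (y0 t + c • z t) (x' t)) t)) ∧
    (∀ y0 z y1 z1 : ℝ → EuclideanSpace ℝ (Fin e),
      y0 0 = a → z 0 = 0 →
      (∀ t ∈ Set.Icc (0:ℝ) 1, HasDerivAt y0 (b (y0 t)) t) →
      (∀ t ∈ Set.Icc (0:ℝ) 1, HasDerivAt z
        ((∫ θ in (0:ℝ)..1, fderiv ℝ b (y0 t + (θ * c) • z t) (z t)) +
          σ (y0 t + c • z t) (x' t)) t) →
      y1 0 = a → z1 0 = 0 →
      (∀ t ∈ Set.Icc (0:ℝ) 1, HasDerivAt y1 (b (y1 t)) t) →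
      (∀ t ∈ Set.Icc (0:ℝ) 1, HasDerivAt z1
        ((∫ θ in (0:ℝ)..1, fderiv ℝ b (y1 t + (θ * c) • z1 t) (z1 t)) +
          σ (y1 t + c • z1 t) (x' t)) t) →
      ∀ t ∈ Set.Icc (0:ℝ) 1, y0 t = y1 t ∧ z t = z1 t) :=
  stmt_10_general e d a c b hb hb1 σ hσ hσ1 x' hx'
end

section
/- Let e, d ∈ ℕ, a ∈ ℝ^e and c ∈ [0,1]. Let b : ℝ^e → ℝ^e be C¹ with ∇b bounded, let σ : ℝ^e → ℝ^{e×d} be bounded, and let x : [0,1] → ℝ^d be C¹. Suppose y^0, ẑ : [0,1] → ℝ^e are differentiable with y^0_0 = a, (y^0)'_t = b(y^0_t), ẑ_0 = 0, and ẑ'_t = ∫₀¹ ∇b(y^0_t + θ c ẑ_t)⟨ẑ_t⟩ dθ + σ(y^0_t + c ẑ_t) x'_t for all t ∈ [0,1]. Then sup_{t∈[0,1]} |ẑ_t| ≤ ‖σ‖_∞ (∫₀¹ |x'_s| ds) e^{‖∇b‖_∞}, where ‖σ‖_∞ = sup_y ‖σ(y)‖ and ‖∇b‖_∞ = sup_y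 ‖∇b(y)‖ (operator norms). -/
open Set MeasureTheory

/-!
Along the trajectory, `‖ẑ'‖ ≤ ‖∇b‖_∞ ‖ẑ‖ + ‖σ‖_∞ |x'|`, because the averaged Jacobian
`∫₀¹ ∇b(⋯) dθ` has operator norm at most `‖∇b‖_∞`. Gronwall's lemma with the integrable
forcing term `‖σ‖_∞ |x'|` then bounds `‖ẑ_t‖` by `e^{‖∇b‖_∞ t} ‖σ‖_∞ ∫₀ᵗ |x'_s| ds`.
-/

section Gronwall

variable {E : Type*} [NormedAddCommGroup E] [NormedSpace ℝ E]

theorem le_exp_mul_integral_of_le_integral {u φ : ℝ → ℝ} {K a b : ℝ} (hK : 0 ≤ K)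
    (hu : Continuous u) (hφ : Continuous φ) (hφ0 : ∀ t ∈ Icc a b, 0 ≤ φ t)
    (h : ∀ t ∈ Icc a b, u t ≤ ∫ s in a..t, K * u s + φ s) :
    ∀ t ∈ Icc a b, u t ≤ Real.exp (K * (t - a)) * ∫ s in a..t, φ s := by
  set G : ℝ → ℝ := fun t => ∫ s in a..t, K * u s + φ s
  have hG : ∀ t, HasDerivAt G (K * u t + φ t) t := fun t =>
    ((continuous_const.mul hu).add hφ |>.integral_hasStrictDerivAt a t).hasDerivAt
  have hexp : ∀ t, HasDerivAt (fun t => Real.exp (K * (a - t)))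
      (Real.exp (K * (a - t)) * (K * -1)) t := fun t =>
    (((hasDerivAt_id t).const_sub a).const_mul K).exp
  have hI : ∀ t, HasDerivAt (fun t => ∫ s in a..t, φ s) (φ t) t := fun t =>
    (hφ.integral_hasStrictDerivAt a t).hasDerivAt
  -- integrating factor: `(e^{K(a-t)} G t)' = e^{K(a-t)} (K (u t - G t) + φ t) ≤ φ t`
  have hdamped : ∀ t ∈ Icc a b, Real.exp (K * (a - t)) * G t ≤ ∫ s in a..t, φ s := by
    refine image_le_of_deriv_right_le_deriv_boundary
      (fun t _ => ((hexp t).mul (hG t)).continuousAt.continuousWithinAt)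
      (fun t _ => ((hexp t).mul (hG t)).hasDerivWithinAt) (by simp [G])
      (fun t _ => (hI t).continuousAt.continuousWithinAt) (fun t _ => (hI t).hasDerivWithinAt) ?_
    intro t ht
    have ht' := Ico_subset_Icc_self ht
    have hexp_le : Real.exp (K * (a - t)) ≤ 1 :=
      Real.exp_le_one_iff.2 (mul_nonpos_of_nonneg_of_nonpos hK (by linarith [ht.1]))
    have hexp_pos := Real.exp_pos (K * (a - t))
    nlinarith [h t ht', hφ0 t ht', mul_nonneg hexp_pos.le (mul_nonneg hK (sub_nonneg.2 (h t ht')))]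
  intro t ht
  calc u t ≤ G t := h t ht
    _ = Real.exp (K * (t - a)) * (Real.exp (K * (a - t)) * G t) := by
      rw [← mul_assoc, ← Real.exp_add]; ring_nf; simp
    _ ≤ Real.exp (K * (t - a)) * ∫ s in a..t, φ s := by gcongr; exact hdamped t ht

theorem norm_le_exp_mul_integral_of_norm_deriv_le {f f' : ℝ → E} {φ : ℝ → ℝ} {K a b : ℝ}
    (hK : 0 ≤ K) (hf : ContinuousOn f (Icc a b))
    (hf' : ∀ t ∈ Ico a b, HasDerivWithinAt f (f' t) (Ici t) t) (hfa : f a = 0)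
    (hφ : Continuous φ) (hφ0 : ∀ t ∈ Icc a b, 0 ≤ φ t)
    (bound : ∀ t ∈ Ico a b, ‖f' t‖ ≤ K * ‖f t‖ + φ t) :
    ∀ t ∈ Icc a b, ‖f t‖ ≤ Real.exp (K * (t - a)) * ∫ s in a..t, φ s := by
  intro t ht
  have hab : a ≤ b := ht.1.trans ht.2
  -- freeze `f` outside `[a, b]` so that `‖f‖` becomes continuous on all of `ℝ`
  set u : ℝ → ℝ := fun s => ‖f (projIcc a b hab s)‖
  have hu : Continuous u :=
    (hf.comp_continuous (continuous_subtype_val.comp continuous_projIcc) fun s =>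
      (projIcc a b hab s).2).norm
  have hu_eq : ∀ s ∈ Icc a b, u s = ‖f s‖ := fun s hs => by simp [u, projIcc_of_mem hab hs]
  have hintegral : ∀ s ∈ Icc a b, u s ≤ ∫ r in a..s, K * u r + φ r := by
    intro s hs
    rw [hu_eq s hs]
    have hrhs : Continuous fun r => K * u r + φ r := by fun_prop
    refine image_norm_le_of_norm_deriv_right_le_deriv_boundary hf hf' (by simp [hfa])
      (fun r => (hrhs.integral_hasStrictDerivAt a r).hasDerivAt) (fun r hr => ?_) hs
    rw [hu_eq r (Ico_subset_Icc_self hr)]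
    exact bound r hr
  simpa only [hu_eq t ht] using le_exp_mul_integral_of_le_integral hK hu hφ hφ0 hintegral t ht

end Gronwall

theorem norm_integral_apply_le_of_norm_le {F G : Type*} [NormedAddCommGroup F]
    [NormedSpace ℝ F] [NormedAddCommGroup G] [NormedSpace ℝ G] {L : ℝ → F →L[ℝ] G} {M : ℝ}
    (hL : ∀ θ, ‖L θ‖ ≤ M) (v : F) : ‖∫ θ in (0:ℝ)..1, L θ v‖ ≤ M * ‖v‖ := by
  simpa using intervalIntegral.norm_integral_le_of_norm_le_const (a := 0) (b := 1) fun θ _ =>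
    ((L θ).le_opNorm v).trans (mul_le_mul_of_nonneg_right (hL θ) (norm_nonneg v))

theorem stmt_11_general (e d : ℕ) (c : ℝ)
    (b : EuclideanSpace ℝ (Fin e) → EuclideanSpace ℝ (Fin e))
    (hdb : BddAbove (Set.range fun y => ‖fderiv ℝ b y‖))
    (σ : EuclideanSpace ℝ (Fin e) →
      (EuclideanSpace ℝ (Fin d) →L[ℝ] EuclideanSpace ℝ (Fin e)))
    (hσ0 : BddAbove (Set.range fun y => ‖σ y‖))
    (x' : ℝ → EuclideanSpace ℝ (Fin d)) (hx' : Continuous x')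
    (y0 z : ℝ → EuclideanSpace ℝ (Fin e))
    (hz0 : z 0 = 0)
    (hz : ∀ t ∈ Set.Icc (0:ℝ) 1, HasDerivAt z
      ((∫ θ in (0:ℝ)..1, fderiv ℝ b (y0 t + (θ * c) • z t) (z t)) +
        σ (y0 t + c • z t) (x' t)) t) :
    ∀ t ∈ Set.Icc (0:ℝ) 1,
      ‖z t‖ ≤ (⨆ y, ‖σ y‖) * (∫ s in (0:ℝ)..1, ‖x' s‖) *
        Real.exp (⨆ y, ‖fderiv ℝ b y‖) := by
  set M := ⨆ y, ‖fderiv ℝ b y‖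
  set S := ⨆ y, ‖σ y‖
  have hM : 0 ≤ M := (norm_nonneg _).trans (le_ciSup hdb 0)
  have hS : 0 ≤ S := (norm_nonneg _).trans (le_ciSup hσ0 0)
  have hdrift : ∀ t, ‖∫ θ in (0:ℝ)..1, fderiv ℝ b (y0 t + (θ * c) • z t) (z t)‖ ≤ M * ‖z t‖ :=
    fun t => norm_integral_apply_le_of_norm_le (fun θ => le_ciSup hdb _) (z t)
  have hnoise : ∀ t, ‖σ (y0 t + c • z t) (x' t)‖ ≤ S * ‖x' t‖ := fun t =>
    ((σ _).le_opNorm _).trans (mul_le_mul_of_nonneg_right (le_ciSup hσ0 _) (norm_nonneg _))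
  have hφ : Continuous fun s => S * ‖x' s‖ := continuous_const.mul hx'.norm
  have hφ0 : ∀ s, 0 ≤ S * ‖x' s‖ := fun s => mul_nonneg hS (norm_nonneg _)
  intro t ht
  have hexp : Real.exp (M * (t - 0)) ≤ Real.exp M := Real.exp_le_exp.2 (by nlinarith [ht.1, ht.2])
  have hforcing : ∫ s in (0:ℝ)..t, S * ‖x' s‖ ≤ ∫ s in (0:ℝ)..1, S * ‖x' s‖ :=
    intervalIntegral.integral_mono_interval le_rfl ht.1 ht.2 (ae_of_all _ hφ0)
      (hφ.intervalIntegrable _ _)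
  calc ‖z t‖ ≤ Real.exp (M * (t - 0)) * ∫ s in (0:ℝ)..t, S * ‖x' s‖ :=
        norm_le_exp_mul_integral_of_norm_deriv_le hM
          (fun s hs => (hz s hs).continuousAt.continuousWithinAt)
          (fun s hs => (hz s (Ico_subset_Icc_self hs)).hasDerivWithinAt) hz0 hφ (fun s _ => hφ0 s)
          (fun s _ => (norm_add_le _ _).trans (add_le_add (hdrift s) (hnoise s))) t ht
    _ ≤ Real.exp M * ∫ s in (0:ℝ)..1, S * ‖x' s‖ :=
        mul_le_mul hexp hforcing (intervalIntegral.integral_nonneg ht.1 fun s _ => hφ0 s)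
          (Real.exp_pos _).le
    _ = S * (∫ s in (0:ℝ)..1, ‖x' s‖) * Real.exp M := by
        rw [intervalIntegral.integral_const_mul]; ring

/-- Gronwall-type a priori bound:
`sup_{t ∈ [0,1]} |ẑ_t| ≤ ‖σ‖_∞ (∫₀¹ |x'_s| ds) e^{‖∇b‖_∞}`. -/
theorem stmt_11 (e d : ℕ) (a : EuclideanSpace ℝ (Fin e)) (c : ℝ) (hc : c ∈ Set.Icc (0:ℝ) 1)
    (b : EuclideanSpace ℝ (Fin e) → EuclideanSpace ℝ (Fin e)) (hb : ContDiff ℝ 1 b)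
    (hdb : BddAbove (Set.range fun y => ‖fderiv ℝ b y‖))
    (σ : EuclideanSpace ℝ (Fin e) →
      (EuclideanSpace ℝ (Fin d) →L[ℝ] EuclideanSpace ℝ (Fin e)))
    (hσ0 : BddAbove (Set.range fun y => ‖σ y‖))
    (x x' : ℝ → EuclideanSpace ℝ (Fin d))
    (hx : ∀ t, HasDerivAt x (x' t) t) (hx' : Continuous x')
    (y0 z : ℝ → EuclideanSpace ℝ (Fin e))
    (hy00 : y0 0 = a) (hz0 : z 0 = 0)
    (hy0 : ∀ t ∈ Set.Icc (0:ℝ) 1, HasDerivAt y0 (b (y0 t)) t)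
    (hz : ∀ t ∈ Set.Icc (0:ℝ) 1, HasDerivAt z
      ((∫ θ in (0:ℝ)..1, fderiv ℝ b (y0 t + (θ * c) • z t) (z t)) +
        σ (y0 t + c • z t) (x' t)) t) :
    ∀ t ∈ Set.Icc (0:ℝ) 1,
      ‖z t‖ ≤ (⨆ y, ‖σ y‖) * (∫ s in (0:ℝ)..1, ‖x' s‖) *
        Real.exp (⨆ y, ‖fderiv ℝ b y‖) :=
  stmt_11_general e d c b hdb σ hσ0 x' hx' y0 z hz0 hz
end

section
/- Let n ∈ ℕ and let (Ω, F, P) be a probability space. Let X_k : Ω → ℝ^n (k ∈ ℕ) and X : Ω → ℝ^n be random vectors such that the law of each X_k is a centered Gaussian measure on ℝ^n and X_k → X almost surely as k → ∞. Then the law of X is a centered Gaussian measure on ℝ^n. -/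
/-
Almost sure convergence implies convergence in distribution, so it suffices that centered
Gaussian laws form a closed set of probability measures for the weak topology. Pushing forward
along a continuous linear functional is weakly continuous, which reduces this to `ℝ`. There, if
`N(0, v_k) → μ`, testing against `exp (-x²)`, whose `N(0, v)`-integral is `(1 + 2v)^(-1/2)`,
forces `v_k → u`, and Lévy's continuity theorem gives `N(0, v_k) → N(0, u)`, so `μ = N(0, u)`.
-/

open Set Filter MeasureTheory

/-- A measure on a finite-dimensional (normed) real vector space is a centered Gaussian
measure if its pushforward under every continuous linear functional is a (possibly
degenerate) real Gaussian measure with mean zero. -/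
def IsCenteredGaussian {V : Type*} [NormedAddCommGroup V] [NormedSpace ℝ V]
    [MeasurableSpace V] [BorelSpace V] (μ : MeasureTheory.Measure V) : Prop :=
  ∀ L : V →L[ℝ] ℝ, ∃ v : NNReal, μ.map L = ProbabilityTheory.gaussianReal 0 v

open ProbabilityTheory Topology
open scoped NNReal

lemma integral_exp_neg_sq_gaussianReal (v : ℝ≥0) :
    ∫ x, Real.exp (-x ^ 2) ∂gaussianReal 0 v = (√(1 + 2 * v))⁻¹ := by
  rcases eq_or_ne v 0 with rfl | hv
  · simp [gaussianReal_zero_var]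
  have hpdf : ∀ x : ℝ, gaussianPDFReal 0 v x • Real.exp (-x ^ 2)
      = (√(2 * Real.pi * v))⁻¹ * Real.exp (-((2 * (v : ℝ))⁻¹ + 1) * x ^ 2) := by
    intro x
    rw [smul_eq_mul, gaussianPDFReal, mul_assoc, ← Real.exp_add]
    congr 2
    field_simp
    ring
  rw [integral_gaussianReal_eq_integral_smul hv]
  simp_rw [hpdf]
  rw [integral_const_mul, integral_gaussian, ← Real.sqrt_inv, ← Real.sqrt_mul (by positivity),
    ← Real.sqrt_inv]
  congr 1
  field_simp

namespace MeasureTheory.ProbabilityMeasure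

noncomputable def gaussianReal (m : ℝ) (v : ℝ≥0) : ProbabilityMeasure ℝ :=
  ⟨ProbabilityTheory.gaussianReal m v, inferInstance⟩

@[simp]
lemma toMeasure_gaussianReal (m : ℝ) (v : ℝ≥0) :
    (gaussianReal m v : Measure ℝ) = ProbabilityTheory.gaussianReal m v := rfl

lemma continuous_gaussianReal (m : ℝ) : Continuous (gaussianReal m) := by
  refine continuous_iff_seqContinuous.2 fun v u hv => tendsto_of_tendsto_charFun fun t => ?_
  simp only [Function.comp_apply, toMeasure_gaussianReal, charFun_gaussianReal]
  have hcont : Continuous fun w : ℝ≥0 => Complex.exp (t * m * Complex.I - w * t ^ 2 / 2) := by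
    fun_prop
  exact (hcont.tendsto u).comp hv

end MeasureTheory.ProbabilityMeasure

open BoundedContinuousFunction in
lemma exists_tendsto_of_tendsto_gaussianReal {v : ℕ → ℝ≥0} {μ : ProbabilityMeasure ℝ}
    (h : Tendsto (fun k => ProbabilityMeasure.gaussianReal 0 (v k)) atTop (𝓝 μ)) :
    ∃ u, Tendsto v atTop (𝓝 u) := by
  let f : ℝ →ᵇ ℝ := ofNormedAddCommGroup (fun x => Real.exp (-x ^ 2)) (by fun_prop) 1 fun x => by
    simp [abs_of_nonneg (Real.exp_nonneg _), Real.exp_le_one_iff, sq_nonneg]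
  set c := ∫ x, Real.exp (-x ^ 2) ∂(μ : Measure ℝ)
  have hc : 0 < c := integral_exp_pos (f.integrable _)
  have hlim : Tendsto (fun k => (√(1 + 2 * v k))⁻¹) atTop (𝓝 c) := by
    simpa [f, integral_exp_neg_sq_gaussianReal] using
      ProbabilityMeasure.tendsto_iff_forall_integral_tendsto.1 h f
  -- `w ↦ (√(1 + 2w))⁻¹` is inverted by `s ↦ (s⁻² - 1) / 2`, which is continuous away from `0`.
  have hvar : Tendsto (fun k => (v k : ℝ)) atTop (𝓝 ((c⁻¹ ^ 2 - 1) / 2)) := by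
    refine (((hlim.inv₀ hc.ne').pow 2).sub_const 1).div_const 2 |>.congr fun k => ?_
    rw [inv_inv, Real.sq_sqrt (by positivity)]
    ring
  exact ⟨_, by simpa [Function.comp_def] using (continuous_real_toNNReal.tendsto _).comp hvar⟩

lemma isClosed_range_gaussianReal_zero : IsClosed (range (ProbabilityMeasure.gaussianReal 0)) := by
  refine IsSeqClosed.isClosed fun μs μ hμs hlim => ?_
  choose v hv using hμs
  obtain rfl : (fun k => ProbabilityMeasure.gaussianReal 0 (v k)) = μs := funext hv
  obtain ⟨u, hu⟩ := exists_tendsto_of_tendsto_gaussianReal hlim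
  have hγ := ((ProbabilityMeasure.continuous_gaussianReal 0).tendsto u).comp hu
  exact ⟨u, tendsto_nhds_unique hγ hlim⟩

lemma isClosed_setOf_isCenteredGaussian {V : Type*} [NormedAddCommGroup V] [NormedSpace ℝ V]
    [MeasurableSpace V] [BorelSpace V] :
    IsClosed {μ : ProbabilityMeasure V | IsCenteredGaussian (μ : Measure V)} := by
  have : {μ : ProbabilityMeasure V | IsCenteredGaussian (μ : Measure V)} =
      ⋂ L : V →L[ℝ] ℝ, (fun μ => μ.map L.continuous.aemeasurable) ⁻¹'
        range (ProbabilityMeasure.gaussianReal 0) := by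
    ext μ
    simp [IsCenteredGaussian, ← ProbabilityMeasure.toMeasure_injective.eq_iff, eq_comm]
  rw [this]
  exact isClosed_iInter fun L =>
    isClosed_range_gaussianReal_zero.preimage (ProbabilityMeasure.continuous_map L.continuous)

theorem stmt_15_general (n : ℕ) {Ω : Type*} [MeasurableSpace Ω] (P : MeasureTheory.Measure Ω)
    [MeasureTheory.IsProbabilityMeasure P]
    (X : ℕ → Ω → EuclideanSpace ℝ (Fin n)) (Y : Ω → EuclideanSpace ℝ (Fin n))
    (hXm : ∀ k, Measurable (X k))
    (hXg : ∀ k, IsCenteredGaussian (P.map (X k)))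
    (hconv : ∀ᵐ ω ∂P, Filter.Tendsto (fun k => X k ω) Filter.atTop (nhds (Y ω))) :
    IsCenteredGaussian (P.map Y) := by
  have hXae : ∀ k, AEMeasurable (X k) P := fun k => (hXm k).aemeasurable
  have hlaw := tendstoInDistribution_of_ae_tendsto hXae
    (aemeasurable_of_tendsto_metrizable_ae' hXae hconv) hconv
  exact isClosed_setOf_isCenteredGaussian.mem_of_tendsto hlaw.tendsto (.of_forall hXg)

/-- If random vectors `X_k` in `ℝ^n` have centered Gaussian laws and
`X_k → X` almost surely, then the law of `X` is a centered Gaussian measure. -/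
theorem stmt_15 (n : ℕ) {Ω : Type*} [MeasurableSpace Ω] (P : MeasureTheory.Measure Ω)
    [MeasureTheory.IsProbabilityMeasure P]
    (X : ℕ → Ω → EuclideanSpace ℝ (Fin n)) (Y : Ω → EuclideanSpace ℝ (Fin n))
    (hXm : ∀ k, Measurable (X k)) (hYm : Measurable Y)
    (hXg : ∀ k, IsCenteredGaussian (P.map (X k)))
    (hconv : ∀ᵐ ω ∂P, Filter.Tendsto (fun k => X k ω) Filter.atTop (nhds (Y ω))) :
    IsCenteredGaussian (P.map Y) :=
  stmt_15_general n P X Y hXm hXg hconv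
end
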